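/- arXiv:1409.1160 — 3 statements merged into one kernel-verified Lean document; each statement's English description precedes it below -/
import Mathlib

section
/- Let a : ℕ → ℝ be a sequence with a_n > 0 for all n, and suppose a is an arithmetic progression of order h ≥ 0. Then a is eventually increasing: there exists n₀ such that a_n ≤ a_{n+1} for all n ≥ n₀. Moreover, if a is not constant, then a_n → ∞ as n → ∞. -/
/-!
The defining relation says that the `(h+1)`-st forward difference of `a` vanishes. By induction
on the order, a sequence whose `m`-th difference vanishes is constant, or tends to `+∞` while
eventually increasing, or tends to `-∞` while eventually decreasing: if `Δb` is a nonzero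
constant or tends to `±∞`, then `Δb` eventually has a fixed sign and is bounded away from `0`.
Positivity rules out the third alternative.
-/

open Filter fwdDiff

/-- `a` is an arithmetic progression of order `h` (real sequences). -/
def IsAPOfOrder (a : ℕ → ℝ) (h : ℕ) : Prop :=
  ∀ n : ℕ, ∑ k ∈ Finset.range (h + 2), (-1 : ℝ) ^ (h + 1 - k) * ((h + 1).choose k) * a (n + k) = 0

section Difference

variable {G : Type*} [AddCommGroup G]

lemma eq_const_of_fwdDiff_eq_zero {b : ℕ → G} (hb : Δ_[1] b = 0) (n : ℕ) : b n = b 0 := by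
  induction n with
  | zero => rfl
  | succ n ih => rw [← ih, ← sub_eq_zero]; exact congrFun hb n

lemma fwdDiff_neg {M : Type*} [AddCommMonoid M] (h : M) (b : M → G) : Δ_[h] (-b) = -Δ_[h] b := by
  funext n
  simp only [fwdDiff, Pi.neg_apply]
  abel

end Difference

section Ordered

variable {R : Type*} [Field R] [LinearOrder R] [IsStrictOrderedRing R] [Archimedean R]

def EventuallyIncreasingToTop (b : ℕ → R) : Prop :=
  Tendsto b atTop atTop ∧ ∀ᶠ n in atTop, b n ≤ b (n + 1)

lemma tendsto_atTop_of_const_le_fwdDiff {b : ℕ → R} {c : R} (hc : 0 < c)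
    (hb : ∀ n, c ≤ Δ_[1] b n) : Tendsto b atTop atTop := by
  have hlin : ∀ n : ℕ, b 0 + n * c ≤ b n := by
    intro n
    induction n with
    | zero => simp
    | succ n ih =>
      have := hb n
      simp only [fwdDiff, Nat.cast_succ] at this ⊢
      linarith
  refine tendsto_atTop_mono hlin (tendsto_atTop_add_const_left _ _ ?_)
  exact tendsto_natCast_atTop_atTop.atTop_mul_const hc

lemma eventuallyIncreasingToTop_of_eventually_const_le_fwdDiff {b : ℕ → R} {c : R} (hc : 0 < c)
    (hb : ∀ᶠ n in atTop, c ≤ Δ_[1] b n) : EventuallyIncreasingToTop b := by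
  obtain ⟨N, hN⟩ := eventually_atTop.1 hb
  refine ⟨(tendsto_add_atTop_iff_nat N).1 ?_, ?_⟩
  · refine tendsto_atTop_of_const_le_fwdDiff (b := fun n ↦ b (n + N)) hc fun n ↦ ?_
    simpa [fwdDiff, add_right_comm n N 1] using hN (n + N) (Nat.le_add_left N n)
  · filter_upwards [hb] with n hn
    exact sub_nonneg.1 (hc.le.trans hn)

theorem eventuallyIncreasingToTop_trichotomy_of_fwdDiff_iter_eq_zero {m : ℕ} {b : ℕ → R}
    (hb : (Δ_[1])^[m] b = 0) :
    (∀ n, b n = b 0) ∨ EventuallyIncreasingToTop b ∨ EventuallyIncreasingToTop (-b) := by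
  induction m generalizing b with
  | zero => exact Or.inl fun n ↦ by simp [show b = 0 from hb]
  | succ m ih =>
    rw [Function.iterate_succ_apply] at hb
    rcases ih hb with hconst | ⟨htop, -⟩ | ⟨hnegTop, -⟩
    · rcases lt_trichotomy (Δ_[1] b 0) 0 with hneg | hzero | hpos
      · refine Or.inr (Or.inr (eventuallyIncreasingToTop_of_eventually_const_le_fwdDiff
          (neg_pos.2 hneg) (Eventually.of_forall fun n ↦ ?_)))
        rw [fwdDiff_neg 1, Pi.neg_apply, hconst n]
      · exact Or.inl (eq_const_of_fwdDiff_eq_zero (funext fun n ↦ (hconst n).trans hzero))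
      · exact Or.inr (Or.inl (eventuallyIncreasingToTop_of_eventually_const_le_fwdDiff hpos
          (Eventually.of_forall fun n ↦ (hconst n).ge)))
    · exact Or.inr (Or.inl (eventuallyIncreasingToTop_of_eventually_const_le_fwdDiff one_pos
        (htop.eventually_ge_atTop 1)))
    · refine Or.inr (Or.inr (eventuallyIncreasingToTop_of_eventually_const_le_fwdDiff one_pos ?_))
      rw [fwdDiff_neg 1]
      exact hnegTop.eventually_ge_atTop 1

end Ordered

lemma IsAPOfOrder.fwdDiff_iter_eq_zero {a : ℕ → ℝ} {h : ℕ} (ha : IsAPOfOrder a h) :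
    (Δ_[1])^[h + 1] a = 0 := by
  funext n
  rw [fwdDiff_iter_eq_sum_shift, Pi.zero_apply, ← ha n]
  refine Finset.sum_congr rfl fun k _ ↦ ?_
  push_cast [zsmul_eq_mul, smul_eq_mul, mul_one]
  ring

theorem stmt_12 (a : ℕ → ℝ) (h : ℕ) (hpos : ∀ n, 0 < a n) (ha : IsAPOfOrder a h) :
    (∃ n₀ : ℕ, ∀ n ≥ n₀, a n ≤ a (n + 1)) ∧
    (¬ (∃ c : ℝ, ∀ n, a n = c) → Filter.Tendsto a Filter.atTop Filter.atTop) := by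
  rcases eventuallyIncreasingToTop_trichotomy_of_fwdDiff_iter_eq_zero ha.fwdDiff_iter_eq_zero
    with hconst | ⟨htop, hmono⟩ | ⟨hnegTop, -⟩
  · exact ⟨⟨0, fun n _ ↦ by rw [hconst n, hconst (n + 1)]⟩, fun hnc ↦ absurd ⟨a 0, hconst⟩ hnc⟩
  · exact ⟨eventually_atTop.1 hmono, fun _ ↦ htop⟩
  · obtain ⟨n, hn⟩ := (hnegTop.eventually_gt_atTop 0).exists
    exact ((hpos n).not_gt (by simpa using hn)).elim
end

section
/- Let a : ℕ → ℝ be a positive sequence, let q, r > 0 be real numbers and k, h ≥ 0 integers. If a^q is an arithmetic progression of strict order k and a^r is an arithmetic progression of strict order h, then a^{q+r} is an arithmetic progression of strict order k + h. -/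
/-!
Write `Δ` for the forward difference, so that `a` is an arithmetic progression of order `h` exactly
when `Δ^(h+1) a = 0`, and of strict order `h` when moreover the constant `Δ^h a` is nonzero. Since
`a^(q+r) = a^q * a^r`, the discrete Leibniz rule
`Δ^m (f g) (n) = ∑ᵢ C(m,i) Δ^i f (n + m - i) Δ^(m-i) g (n)` applies: for `m = k + h` only the
term `i = k` survives, and it is the nonzero constant `C(k+h,k) Δ^k f Δ^h g`, whose difference
vanishes.
-/

open Finset Function fwdDiff

/-- `a` is an arithmetic progression of strict order `h`. -/
def IsAPOfStrictOrder (a : ℕ → ℝ) (h : ℕ) : Prop :=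
  IsAPOfOrder a h ∧ (h = 0 ∨ ¬ IsAPOfOrder a (h - 1))

section fwdDiff

variable {M G R : Type*} [AddCommMonoid M] [AddCommGroup G] [Ring R] (s : M)

lemma fwdDiff_iter_eq_zero_of_le {f : M → G} {m j : ℕ} (hf : Δ_[s] ^[m] f = 0) (hmj : m ≤ j) :
    Δ_[s] ^[j] f = 0 := by
  rw [← Nat.sub_add_cancel hmj, iterate_add_apply, hf]
  exact iterate_fixed (fwdDiff_const s 0) _

lemma fwdDiff_mul (f g : M → R) :
    Δ_[s] (f * g) = (fun y ↦ f (y + s)) * Δ_[s] g + Δ_[s] f * g := by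
  ext y
  simp only [fwdDiff, Pi.mul_apply, Pi.add_apply]
  noncomm_ring

lemma fwdDiff_iter_mul (f g : M → R) (m : ℕ) (y : M) :
    Δ_[s] ^[m] (f * g) y =
      ∑ i ∈ range (m + 1),
        (m.choose i : R) * (Δ_[s] ^[i] f (y + (m - i) • s) * Δ_[s] ^[m - i] g y) := by
  induction m generalizing f g with
  | zero => simp
  | succ m ih =>
    rw [iterate_succ_apply, fwdDiff_mul, fwdDiff_iter_add, Pi.add_apply, ih, ih,
      sum_choose_succ_mul (fun i j ↦ Δ_[s] ^[i] f (y + j • s) * Δ_[s] ^[j] g y)]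
    congr 1
    refine sum_congr rfl fun i hi ↦ ?_
    have him : i ≤ m := Nat.lt_succ_iff.mp (mem_range.mp hi)
    rw [fwdDiff_iter_comp_add, ← iterate_succ_apply, add_assoc, ← succ_nsmul,
      Nat.sub_add_comm him]

variable {s}

lemma apply_add_eq_of_fwdDiff_eq_zero {F : M → G} (hF : Δ_[s] F = 0) (y : M) : F (y + s) = F y :=
  sub_eq_zero.mp (congrFun hF y)

lemma fwdDiff_iter_add_mul {f g : M → R} {k l : ℕ} (hf : Δ_[s] ^[k + 1] f = 0)
    (hg : Δ_[s] ^[l + 1] g = 0) (y : M) :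
    Δ_[s] ^[k + l] (f * g) y =
      ((k + l).choose k : R) * (Δ_[s] ^[k] f (y + l • s) * Δ_[s] ^[l] g y) := by
  rw [fwdDiff_iter_mul, sum_eq_single k, Nat.add_sub_cancel_left]
  · intro i _ hik
    rcases lt_or_gt_of_ne hik with hlt | hgt
    · rw [fwdDiff_iter_eq_zero_of_le s hg (by omega), Pi.zero_apply, mul_zero, mul_zero]
    · rw [fwdDiff_iter_eq_zero_of_le s hf hgt, Pi.zero_apply, zero_mul, mul_zero]
  · intro hk
    exact absurd (mem_range.mpr (by omega)) hk

lemma fwdDiff_iter_add_succ_mul_eq_zero {f g : M → R} {k l : ℕ} (hf : Δ_[s] ^[k + 1] f = 0)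
    (hg : Δ_[s] ^[l + 1] g = 0) : Δ_[s] ^[k + l + 1] (f * g) = 0 := by
  ext y
  rw [iterate_succ_apply', fwdDiff, fwdDiff_iter_add_mul hf hg, fwdDiff_iter_add_mul hf hg,
    add_right_comm]
  rw [iterate_succ_apply'] at hf hg
  rw [apply_add_eq_of_fwdDiff_eq_zero hf, apply_add_eq_of_fwdDiff_eq_zero hg,
    sub_self, Pi.zero_apply]

end fwdDiff

lemma apply_eq_apply_zero_of_fwdDiff_eq_zero {G : Type*} [AddCommGroup G] {f : ℕ → G}
    (hf : Δ_[1] f = 0) (n : ℕ) : f n = f 0 := by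
  induction n with
  | zero => rfl
  | succ n ih => rw [apply_add_eq_of_fwdDiff_eq_zero hf, ih]

lemma isAPOfOrder_iff_fwdDiff_iter_eq_zero (a : ℕ → ℝ) (h : ℕ) :
    IsAPOfOrder a h ↔ Δ_[1] ^[h + 1] a = 0 := by
  have hsum : ∀ n, Δ_[1] ^[h + 1] a n =
      ∑ k ∈ range (h + 2), (-1 : ℝ) ^ (h + 1 - k) * ((h + 1).choose k) * a (n + k) := by
    intro n
    rw [fwdDiff_iter_eq_sum_shift]
    refine sum_congr rfl fun k _ ↦ ?_
    rw [smul_eq_mul, mul_one, zsmul_eq_mul]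
    push_cast
    rfl
  simp only [IsAPOfOrder, funext_iff, hsum, Pi.zero_apply]

lemma IsAPOfStrictOrder.fwdDiff_iter_ne_zero {a : ℕ → ℝ} {k : ℕ} (ha : IsAPOfStrictOrder a k)
    (ha0 : a 0 ≠ 0) (n : ℕ) : Δ_[1] ^[k] a n ≠ 0 := by
  obtain ⟨hord, hstrict⟩ := ha
  rw [isAPOfOrder_iff_fwdDiff_iter_eq_zero, iterate_succ_apply'] at hord
  rw [apply_eq_apply_zero_of_fwdDiff_eq_zero hord]
  rcases Nat.eq_zero_or_pos k with rfl | hk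
  · exact ha0
  · refine fun hzero ↦ (hstrict.resolve_left hk.ne') ?_
    rw [isAPOfOrder_iff_fwdDiff_iter_eq_zero, Nat.sub_add_cancel hk]
    ext n
    rw [apply_eq_apply_zero_of_fwdDiff_eq_zero hord, hzero, Pi.zero_apply]

lemma IsAPOfStrictOrder.mul {f g : ℕ → ℝ} {k l : ℕ} (hf : IsAPOfStrictOrder f k) (hf0 : f 0 ≠ 0)
    (hg : IsAPOfStrictOrder g l) (hg0 : g 0 ≠ 0) : IsAPOfStrictOrder (f * g) (k + l) := by
  have hfo := (isAPOfOrder_iff_fwdDiff_iter_eq_zero f k).mp hf.1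
  have hgo := (isAPOfOrder_iff_fwdDiff_iter_eq_zero g l).mp hg.1
  refine ⟨(isAPOfOrder_iff_fwdDiff_iter_eq_zero _ _).mpr
    (fwdDiff_iter_add_succ_mul_eq_zero hfo hgo), ?_⟩
  rcases Nat.eq_zero_or_pos (k + l) with hkl | hkl
  · exact .inl hkl
  refine .inr fun hlow ↦ ?_
  rw [isAPOfOrder_iff_fwdDiff_iter_eq_zero, Nat.sub_add_cancel hkl] at hlow
  have hlead := fwdDiff_iter_add_mul hfo hgo 0
  rw [hlow, Pi.zero_apply, eq_comm] at hlead
  have hchoose : ((k + l).choose k : ℝ) ≠ 0 :=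
    Nat.cast_ne_zero.mpr (Nat.choose_pos (Nat.le_add_right k l)).ne'
  exact mul_ne_zero hchoose
    (mul_ne_zero (hf.fwdDiff_iter_ne_zero hf0 _) (hg.fwdDiff_iter_ne_zero hg0 _)) hlead

theorem stmt_13_general (a : ℕ → ℝ) (hpos : ∀ n, 0 < a n) (q r : ℝ)
    (k h : ℕ)
    (haq : IsAPOfStrictOrder (fun n => a n ^ q) k)
    (har : IsAPOfStrictOrder (fun n => a n ^ r) h) :
    IsAPOfStrictOrder (fun n => a n ^ (q + r)) (k + h) := by
  have hsplit : (fun n => a n ^ (q + r)) = (fun n => a n ^ q) * (fun n => a n ^ r) :=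
    funext fun n ↦ Real.rpow_add (hpos n) q r
  rw [hsplit]
  exact haq.mul (Real.rpow_pos_of_pos (hpos 0) q).ne' har (Real.rpow_pos_of_pos (hpos 0) r).ne'

theorem stmt_13 (a : ℕ → ℝ) (hpos : ∀ n, 0 < a n) (q r : ℝ) (hq : 0 < q) (hr : 0 < r)
    (k h : ℕ)
    (haq : IsAPOfStrictOrder (fun n => a n ^ q) k)
    (har : IsAPOfStrictOrder (fun n => a n ^ r) h) :
    IsAPOfStrictOrder (fun n => a n ^ (q + r)) (k + h) :=
  stmt_13_general a hpos q r k h haq har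
end

section
/- Let a : ℕ → ℝ be a non-constant positive sequence, let q, r > 0 be real numbers and k, h ≥ 1 integers. If a^q is an arithmetic progression of strict order k and a^r is an arithmetic progression of strict order h, then a^t is an arithmetic progression of strict order d, where d = gcd(k, h) and t = q·d/k (which also equals r·d/h). -/
/-!
An arithmetic progression of strict order `m` is exactly the sequence of values on `ℕ` of a
polynomial of degree `m` (Newton's forward difference formula). So `a ^ q = P` and `a ^ r = Q` on
`ℕ` with `deg P = k`, `deg Q = h`, and comparing growth rates gives `h q = k r`. Writing
`k = d k'`, `h = d h'` with `k', h'` coprime, this yields `P ^ h' = Q ^ k'`; as `ℝ[X]` is integrally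
closed, `P = R ^ k'` and `Q = R ^ h'` for a polynomial `R`, which has degree `d` and is positive on
`ℕ` because `k'` or `h'` is odd. Hence `a ^ (q d / k) = a ^ (q / k') = R` on `ℕ`.
-/

open Polynomial Finset Filter Topology Real

lemma fwdDiff_iter_comp_natCast {R G : Type*} [Semiring R] [AddCommGroup G] (f : R → G)
    (j n : ℕ) : (fwdDiff 1)^[j] (fun m : ℕ ↦ f m) n = (fwdDiff 1)^[j] f n := by
  simp [fwdDiff_iter_eq_sum_shift]

lemma Polynomial.eq_of_eval_natCast_eq {R : Type*} [CommRing R] [IsDomain R] [CharZero R]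
    {p q : R[X]} (h : ∀ n : ℕ, p.eval (n : R) = q.eval (n : R)) : p = q :=
  eq_of_infinite_eval_eq p q <| (Set.infinite_range_of_injective Nat.cast_injective).mono <| by
    rintro _ ⟨n, rfl⟩
    exact h n

/-- Newton's forward difference formula: a sequence whose `(m+1)`-st difference vanishes is
given by the polynomial `∑_{j ≤ m} Δʲ b 0 · X(X-1)⋯(X-j+1) / j!`. -/
lemma exists_natDegree_le_of_fwdDiff_iter_eq_zero {K : Type*} [Field K] [CharZero K]
    {b : ℕ → K} {m : ℕ} (hb : (fwdDiff 1)^[m + 1] b = 0) :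
    ∃ p : K[X], p.natDegree ≤ m ∧ ∀ n : ℕ, p.eval (n : K) = b n := by
  have hvanish : ∀ j, m + 1 ≤ j → (fwdDiff 1)^[j] b 0 = 0 := by
    intro j hj
    obtain ⟨i, rfl⟩ := Nat.exists_eq_add_of_le' hj
    rw [Function.iterate_add_apply, hb]
    simp [fwdDiff_iter_eq_sum_shift]
  refine ⟨∑ j ∈ range (m + 1), C ((fwdDiff 1)^[j] b 0 / j.factorial) * descPochhammer K j, ?_, ?_⟩
  · refine natDegree_sum_le_of_forall_le _ _ fun j hj ↦ (natDegree_C_mul_le _ _).trans ?_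
    rw [descPochhammer_natDegree]
    exact Nat.lt_succ_iff.mp (mem_range.mp hj)
  intro n
  have hterm : ∀ j, (C ((fwdDiff 1)^[j] b 0 / j.factorial) * descPochhammer K j).eval (n : K)
      = n.choose j • (fwdDiff 1)^[j] b 0 := by
    intro j
    have : (j.factorial : K) ≠ 0 := Nat.cast_ne_zero.mpr j.factorial_ne_zero
    rw [eval_mul, eval_C, descPochhammer_eval_eq_descFactorial,
      Nat.descFactorial_eq_factorial_mul_choose, nsmul_eq_mul]
    push_cast
    field_simp
  calc (∑ j ∈ range (m + 1), C ((fwdDiff 1)^[j] b 0 / j.factorial) * descPochhammer K j).eval (n : K)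
      = ∑ j ∈ range (n + m + 1), n.choose j • (fwdDiff 1)^[j] b 0 := by
        rw [eval_finsetSum]
        simp_rw [hterm]
        refine sum_subset (range_subset_range.2 (by omega)) fun j _ hj ↦ ?_
        rw [hvanish j (by simpa using hj), smul_zero]
    _ = ∑ j ∈ range (n + 1), n.choose j • (fwdDiff 1)^[j] b 0 := by
        refine (sum_subset (range_subset_range.2 (by omega)) fun j _ hj ↦ ?_).symm
        rw [Nat.choose_eq_zero_of_lt (by simpa using hj), zero_smul]
    _ = b n := by simpa using (shift_eq_sum_fwdDiff_iter 1 b n 0).symm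

lemma isAPOfOrder_iff_fwdDiff_iter_eq_zero_s15 (b : ℕ → ℝ) (m : ℕ) :
    IsAPOfOrder b m ↔ (fwdDiff 1)^[m + 1] b = 0 := by
  rw [funext_iff]
  refine forall_congr' fun n ↦ ?_
  rw [fwdDiff_iter_eq_sum_shift, Pi.zero_apply]
  congr! 2 with j
  rw [zsmul_eq_mul, smul_eq_mul, mul_one]
  push_cast
  ring

lemma isAPOfOrder_iff_exists_natDegree_le (b : ℕ → ℝ) (m : ℕ) :
    IsAPOfOrder b m ↔ ∃ p : ℝ[X], p.natDegree ≤ m ∧ ∀ n : ℕ, p.eval (n : ℝ) = b n := by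
  rw [isAPOfOrder_iff_fwdDiff_iter_eq_zero_s15]
  refine ⟨exists_natDegree_le_of_fwdDiff_iter_eq_zero, ?_⟩
  rintro ⟨p, hp, hpb⟩
  obtain rfl : (fun n : ℕ ↦ p.eval (n : ℝ)) = b := funext hpb
  funext n
  exact (fwdDiff_iter_comp_natCast _ _ n).trans
    (congrFun (fwdDiff_iter_eq_zero_of_degree_lt (P := p) (by omega)) _)

lemma isAPOfStrictOrder_iff_exists_natDegree_eq (b : ℕ → ℝ) (m : ℕ) :
    IsAPOfStrictOrder b m ↔ ∃ p : ℝ[X], p.natDegree = m ∧ ∀ n : ℕ, p.eval (n : ℝ) = b n := by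
  simp only [IsAPOfStrictOrder, isAPOfOrder_iff_exists_natDegree_le]
  constructor
  · rintro ⟨⟨p, hpm, hp⟩, hstrict⟩
    refine ⟨p, le_antisymm hpm ?_, hp⟩
    rcases hstrict with rfl | hlow
    · exact Nat.zero_le _
    · by_contra! hlt
      exact hlow ⟨p, by omega, hp⟩
  · rintro ⟨p, rfl, hp⟩
    refine ⟨⟨p, le_rfl, hp⟩, or_iff_not_imp_left.mpr fun hp0 ↦ ?_⟩
    rintro ⟨p', hp', hp'b⟩
    obtain rfl : p = p' := eq_of_eval_natCast_eq fun n ↦ (hp n).trans (hp'b n).symm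
    omega

lemma Polynomial.tendsto_eval_natCast_div_pow_natDegree {p : ℝ[X]} (hp : p ≠ 0) :
    Tendsto (fun n : ℕ ↦ p.eval (n : ℝ) / (n : ℝ) ^ p.natDegree) atTop (𝓝 p.leadingCoeff) := by
  have hdeg : p.degree = (X ^ p.natDegree : ℝ[X]).degree := by
    rw [degree_X_pow, degree_eq_natDegree hp]
  have := (div_tendsto_atTop_leadingCoeff_div_of_degree_eq _ _ hdeg).comp
    tendsto_natCast_atTop_atTop
  simpa [Function.comp_def] using this

lemma Polynomial.leadingCoeff_pos_of_eval_natCast_pos {p : ℝ[X]}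
    (hp : ∀ n : ℕ, 0 < p.eval (n : ℝ)) : 0 < p.leadingCoeff := by
  have hp0 : p ≠ 0 := by
    rintro rfl
    simpa using hp 0
  refine (ge_of_tendsto' (tendsto_eval_natCast_div_pow_natDegree hp0) fun n ↦ ?_).lt_of_ne' ?_
  · exact div_nonneg (hp n).le (by positivity)
  · exact leadingCoeff_ne_zero.mpr hp0

lemma eq_zero_of_tendsto_natCast_rpow {e c : ℝ} (hc : c ≠ 0)
    (h : Tendsto (fun n : ℕ ↦ (n : ℝ) ^ e) atTop (𝓝 c)) : e = 0 := by
  rcases lt_trichotomy e 0 with he | he | he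
  · have h0 := (tendsto_rpow_neg_atTop (neg_pos.mpr he)).comp tendsto_natCast_atTop_atTop
    rw [neg_neg] at h0
    exact absurd (tendsto_nhds_unique h h0) hc
  · exact he
  · exact absurd h (not_tendsto_nhds_of_tendsto_atTop
      ((tendsto_rpow_atTop he).comp tendsto_natCast_atTop_atTop) c)

/-- Comparing the growth of both sides, `Q = P ^ s` on `ℕ` forces `deg Q = s · deg P`. -/
lemma Polynomial.natDegree_eq_mul_of_eval_natCast_eq_rpow {P Q : ℝ[X]} {s : ℝ}
    (hP : ∀ n : ℕ, 0 < P.eval (n : ℝ)) (hQ : ∀ n : ℕ, Q.eval (n : ℝ) = P.eval (n : ℝ) ^ s) :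
    (Q.natDegree : ℝ) = s * P.natDegree := by
  have hlcP := leadingCoeff_pos_of_eval_natCast_pos hP
  have hlcQ := leadingCoeff_pos_of_eval_natCast_pos fun n ↦ hQ n ▸ rpow_pos_of_pos (hP n) s
  have hlim : Tendsto (fun n : ℕ ↦ (n : ℝ) ^ ((Q.natDegree : ℝ) - s * P.natDegree)) atTop
      (𝓝 (P.leadingCoeff ^ s / Q.leadingCoeff)) := by
    refine (((tendsto_eval_natCast_div_pow_natDegree (leadingCoeff_ne_zero.mp hlcP.ne')).rpow_const
      (Or.inl hlcP.ne')).div (tendsto_eval_natCast_div_pow_natDegree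
      (leadingCoeff_ne_zero.mp hlcQ.ne')) hlcQ.ne').congr' ?_
    filter_upwards [eventually_gt_atTop 0] with n hn
    have hn : (0 : ℝ) < n := Nat.cast_pos.mpr hn
    rw [Pi.div_apply, div_rpow (hP n).le (by positivity), ← hQ n, ← rpow_natCast, ← rpow_natCast,
      ← rpow_mul hn.le, div_div_div_cancel_left' _ _ (hQ n ▸ rpow_pos_of_pos (hP n) s).ne',
      ← rpow_sub hn, mul_comm]
  exact sub_eq_zero.mp (eq_zero_of_tendsto_natCast_rpow (by positivity) hlim)

lemma exists_eq_pow_of_pow_eq_pow_of_coprime {A : Type*} [CommRing A] [IsDomain A]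
    [IsIntegrallyClosed A] {a b : A} {m n : ℕ} (hmn : m.Coprime n) (hm : 0 < m)
    (hab : a ^ n = b ^ m) : ∃ c : A, a = c ^ m ∧ b = c ^ n := by
  let K := FractionRing A
  have hinj : Function.Injective (algebraMap A K) := IsFractionRing.injective A K
  obtain ⟨γ, hγa, hγb⟩ := (pow_eq_pow_iff_of_coprime (a := algebraMap A K a)
    (b := algebraMap A K b) hmn.symm).mp
    (by rw [← map_pow, ← map_pow, hab])
  have hγ : IsIntegral A γ := IsIntegral.of_pow hm (hγa ▸ isIntegral_algebraMap)
  obtain ⟨c, rfl⟩ := IsIntegrallyClosed.isIntegral_iff.mp hγ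
  exact ⟨c, hinj (by rw [hγa, map_pow]), hinj (by rw [hγb, map_pow])⟩

lemma pos_of_pow_pos_of_coprime {R : Type*} [Ring R] [LinearOrder R] [IsStrictOrderedRing R]
    {x : R} {m n : ℕ} (hmn : m.Coprime n) (hm : 0 < x ^ m) (hn : 0 < x ^ n) : 0 < x := by
  rcases Nat.even_or_odd m with hme | hmo
  · have hno : Odd n := by
      rw [← Nat.not_even_iff_odd]
      intro hne
      simpa using Nat.dvd_gcd hme.two_dvd hne.two_dvd |>.trans hmn.dvd
    exact hno.pow_pos_iff.mp hn
  · exact hmo.pow_pos_iff.mp hm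

lemma exists_eval_natCast_eq_rpow_div {a : ℕ → ℝ} (ha : ∀ n, 0 < a n) {P Q : ℝ[X]} {q r : ℝ}
    {m n : ℕ} (hmn : m.Coprime n) (hm : 0 < m) (hqr : q * n = r * m)
    (hP : ∀ i : ℕ, P.eval (i : ℝ) = a i ^ q) (hQ : ∀ i : ℕ, Q.eval (i : ℝ) = a i ^ r) :
    ∃ R : ℝ[X], R ^ m = P ∧ ∀ i : ℕ, R.eval (i : ℝ) = a i ^ (q / m) := by
  have hPQ : P ^ n = Q ^ m := eq_of_eval_natCast_eq fun i ↦ by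
    rw [eval_pow, eval_pow, hP, hQ, ← rpow_natCast, ← rpow_natCast, ← rpow_mul (ha i).le,
      ← rpow_mul (ha i).le, hqr]
  obtain ⟨R, rfl, rfl⟩ := exists_eq_pow_of_pow_eq_pow_of_coprime hmn hm hPQ
  refine ⟨R, rfl, fun i ↦ ?_⟩
  have hR : 0 < R.eval (i : ℝ) := pos_of_pow_pos_of_coprime hmn
    (by rw [← eval_pow, hP]; exact rpow_pos_of_pos (ha i) q)
    (by rw [← eval_pow, hQ]; exact rpow_pos_of_pos (ha i) r)
  rw [div_eq_mul_inv, rpow_mul (ha i).le, ← hP, eval_pow, ← rpow_natCast, ← rpow_mul hR.le,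
    mul_inv_cancel₀ (by positivity), rpow_one]

theorem stmt_15_general (a : ℕ → ℝ) (hpos : ∀ n, 0 < a n)
    (q r : ℝ) (hq : 0 < q) (k h : ℕ) (hk : 1 ≤ k) (hh : 1 ≤ h)
    (haq : IsAPOfStrictOrder (fun n => a n ^ q) k)
    (har : IsAPOfStrictOrder (fun n => a n ^ r) h) :
    IsAPOfStrictOrder (fun n => a n ^ (q * (Nat.gcd k h : ℝ) / k)) (Nat.gcd k h) ∧
      q * (Nat.gcd k h : ℝ) / k = r * (Nat.gcd k h : ℝ) / h := by
  obtain ⟨P, hPk, hP⟩ := (isAPOfStrictOrder_iff_exists_natDegree_eq _ _).mp haq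
  obtain ⟨Q, hQh, hQ⟩ := (isAPOfStrictOrder_iff_exists_natDegree_eq _ _).mp har
  have hdeg : (h : ℝ) * q = k * r := by
    have := natDegree_eq_mul_of_eval_natCast_eq_rpow (Q := Q) (s := r / q)
      (fun n ↦ hP n ▸ rpow_pos_of_pos (hpos n) q)
      (fun n ↦ by rw [hP, hQ, ← rpow_mul (hpos n).le, mul_div_cancel₀ _ hq.ne'])
    rw [← hPk, ← hQh, this]
    field_simp
  obtain ⟨k', h', hcop, hk', hh'⟩ := Nat.exists_coprime k h
  set d := k.gcd h
  have hd : (d : ℝ) ≠ 0 := Nat.cast_ne_zero.mpr (Nat.gcd_pos_of_pos_left _ hk).ne'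
  have hk'0 : 0 < k' := Nat.pos_of_ne_zero (by rintro rfl; omega)
  have hh'0 : 0 < h' := Nat.pos_of_ne_zero (by rintro rfl; omega)
  have hqr : q * h' = r * k' :=
    mul_right_cancel₀ hd (by push_cast [hk', hh'] at hdeg; linear_combination hdeg)
  obtain ⟨R, hRP, hR⟩ := exists_eval_natCast_eq_rpow_div hpos hcop hk'0 hqr hP hQ
  have hexp : q * d / k = q / k' := by
    rw [hk']
    push_cast
    field_simp
  refine ⟨(isAPOfStrictOrder_iff_exists_natDegree_eq _ _).mpr ⟨R, ?_, fun n ↦ by rw [hexp, hR]⟩, ?_⟩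
  · apply Nat.eq_of_mul_eq_mul_left hk'0
    rw [← natDegree_pow, hRP, hPk, hk', mul_comm]
  · rw [hexp, hh']
    push_cast
    field_simp
    linear_combination hqr

theorem stmt_15 (a : ℕ → ℝ) (hpos : ∀ n, 0 < a n)
    (hnc : ¬ (∃ c : ℝ, ∀ n, a n = c))
    (q r : ℝ) (hq : 0 < q) (hr : 0 < r) (k h : ℕ) (hk : 1 ≤ k) (hh : 1 ≤ h)
    (haq : IsAPOfStrictOrder (fun n => a n ^ q) k)
    (har : IsAPOfStrictOrder (fun n => a n ^ r) h) :
    IsAPOfStrictOrder (fun n => a n ^ (q * (Nat.gcd k h : ℝ) / k)) (Nat.gcd k h) ∧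
      q * (Nat.gcd k h : ℝ) / k = r * (Nat.gcd k h : ℝ) / h :=
  stmt_15_general a hpos q r hq k h hk hh haq har
end
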